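/- arXiv:2303.04239 — 2 statements merged into one kernel-verified Lean document; each statement's English description precedes it below -/
import Mathlib

section
/- Let P be a Markov transition kernel on (X, 𝓑), let U ∈ 𝓑, 0 < δ ≤ 1, and let μ be a probability measure with μ(U) = 1 such that P(x, B) ≥ δ μ(B) for all x ∈ U, B ∈ 𝓑. Let P̂ be the associated δ/2-split kernel on X × {0,1}. Then for every finite measure λ on X, (λ*) P̂ = (λP)*, i.e., the split of λ, evolved one step under the split kernel, equals the split of the one-step evolution λP of λ under P. In particular, the original chain started from λ is the marginal (under the projection X × {0,1} → X) of the split chain started from λ*. -/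
/-!
Statement 11: the split chain has the original chain as its marginal. Given a Markov kernel
`P`, a small set `U` with `P(x,·) ≥ δ μ(·)` on `U` and `μ(U) = 1` (`0 < δ ≤ 1`), and the
`δ/2`-split kernel `P̂` on `X × {0,1}`, for every finite measure `λ` on `X` one has
`(λ*) P̂ = (λ P)*`: for every measurable `A ⊆ X × {0,1}`,
`∫ P̂(z, A) λ*(dz) = (λP)*(A)`. In particular (the time-zero instance of the marginal
statement) the projection of `λ*` to `X` is `λ`.

`{0,1}` is modelled by `Bool`. `splitMeasure U δ λ` is the split `λ*` and
`splitKernel P U μ δ` is the split kernel `P̂` (with truncated measure subtraction on `U₀`,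
which agrees with the intended difference since `2P* ≥ δμ*` there).
-/

open MeasureTheory ProbabilityTheory ENNReal
open scoped Classical

/-- The split `λ*` of a measure `λ`: `λ*(A₀) = (1-δ/2)λ(A∩U) + λ(A∩Uᶜ)`,
`λ*(A₁) = (δ/2)λ(A∩U)`. -/
noncomputable def splitMeasure {X : Type*} [MeasurableSpace X] (U : Set X) (δ : ℝ≥0∞)
    (lam : Measure X) : Measure (X × Bool) :=
  (1 - δ / 2) • ((lam.restrict U).map (fun x => (x, false)))
    + (lam.restrict Uᶜ).map (fun x => (x, false))
    + (δ / 2) • ((lam.restrict U).map (fun x => (x, true)))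

/-- The `δ/2`-split kernel `P̂` on `X × Bool`. -/
noncomputable def splitKernel {X : Type*} [MeasurableSpace X] (P : Kernel X X) (U : Set X)
    (μ : Measure X) (δ : ℝ≥0∞) : X × Bool → Measure (X × Bool) := fun z =>
  if z.2 = true then splitMeasure U δ μ
  else if z.1 ∈ U then
    (2 - δ)⁻¹ • (2 • splitMeasure U δ (P z.1) - δ • splitMeasure U δ μ)
  else splitMeasure U δ (P z.1)

/-!
On `U₀` the split kernel is designed so that its fibre mixture
`(1 - δ/2) P̂(x₀, ·) + (δ/2) P̂(x₁, ·)` equals `P*(x, ·)`; off `U` it is `P*(x, ·)` outright.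
Integrating `P̂` against `λ*` averages over exactly these fibres, so `λ* P̂ = ∫ P*(x, ·) λ(dx)`,
and this is `(λP)*` because splitting commutes with mixtures. Projecting `λ*` to `X` adds the
two weights `1 - δ/2` and `δ/2` on `U` back together.
-/

section SplitChain

open Measure

variable {X : Type*} [MeasurableSpace X] {U : Set X} {δ : ℝ≥0∞}

lemma splitMeasure_apply (ν : Measure X) {A : Set (X × Bool)} (hA : MeasurableSet A) :
    splitMeasure U δ ν A
      = (1 - δ / 2) * ν ((·, false) ⁻¹' A ∩ U) + ν ((·, false) ⁻¹' A ∩ Uᶜ)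
        + δ / 2 * ν ((·, true) ⁻¹' A ∩ U) := by
  have h0 : Measurable (fun x : X => (x, false)) := measurable_prodMk_right
  have h1 : Measurable (fun x : X => (x, true)) := measurable_prodMk_right
  simp [splitMeasure, map_apply h0 hA, map_apply h1 hA, restrict_apply (h0 hA),
    restrict_apply (h1 hA)]

lemma lintegral_splitMeasure (ν : Measure X) (f : X × Bool → ℝ≥0∞) :
    ∫⁻ z, f z ∂(splitMeasure U δ ν)
      = (1 - δ / 2) * ∫⁻ x in U, f (x, false) ∂ν + ∫⁻ x in Uᶜ, f (x, false) ∂ν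
        + δ / 2 * ∫⁻ x in U, f (x, true) ∂ν := by
  rw [splitMeasure, lintegral_add_measure, lintegral_add_measure, lintegral_smul_measure,
    lintegral_smul_measure, (measurableEmbedding_prod_mk_right false).lintegral_map,
    (measurableEmbedding_prod_mk_right false).lintegral_map,
    (measurableEmbedding_prod_mk_right true).lintegral_map, smul_eq_mul, smul_eq_mul]

lemma splitMeasure_map_fst (hU : MeasurableSet U) (hδ : δ ≤ 2) (ν : Measure X) :
    (splitMeasure U δ ν).map Prod.fst = ν := by
  ext A hA
  rw [map_apply measurable_fst hA, splitMeasure_apply ν (measurable_fst hA)]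
  simp only [Set.preimage_preimage, Set.preimage_id']
  rw [add_right_comm, ← add_mul, tsub_add_cancel_of_le (ENNReal.div_le_of_le_mul (by simpa)),
    one_mul, ← Set.sdiff_eq, measure_inter_add_sdiff A hU]

lemma splitMeasure_smul (c : ℝ≥0∞) (ν : Measure X) :
    splitMeasure U δ (c • ν) = c • splitMeasure U δ ν := by
  simp only [splitMeasure, restrict_smul, Measure.map_smul, smul_add, smul_comm c]

lemma splitMeasure_mono {ν ν' : Measure X} (h : ν ≤ ν') :
    splitMeasure U δ ν ≤ splitMeasure U δ ν' := by
  unfold splitMeasure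
  gcongr <;> exact measurable_prodMk_right

lemma isFiniteMeasure_splitMeasure (hδ : δ ≠ ∞) (ν : Measure X) [IsFiniteMeasure ν] :
    IsFiniteMeasure (splitMeasure U δ ν) := by
  constructor
  rw [splitMeasure_apply ν MeasurableSet.univ]
  finiteness

lemma splitMeasure_bind_apply (hU : MeasurableSet U) (ν : Measure X) (κ : Kernel X X)
    {A : Set (X × Bool)} (hA : MeasurableSet A) :
    splitMeasure U δ (ν.bind κ) A = ∫⁻ x, splitMeasure U δ (κ x) A ∂ν := by
  have hB0 : MeasurableSet ((·, false) ⁻¹' A : Set X) := measurable_prodMk_right hA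
  have hB1 : MeasurableSet ((·, true) ⁻¹' A : Set X) := measurable_prodMk_right hA
  have hκ0U := κ.measurable_coe (hB0.inter hU)
  have hκ0Uc := κ.measurable_coe (hB0.inter hU.compl)
  have hκ1U := κ.measurable_coe (hB1.inter hU)
  simp_rw [splitMeasure_apply _ hA]
  rw [lintegral_add_left ((hκ0U.const_mul _).fun_add hκ0Uc),
    lintegral_add_left (hκ0U.const_mul _), lintegral_const_mul _ hκ0U,
    lintegral_const_mul _ hκ1U, bind_apply (hB0.inter hU) κ.aemeasurable,
    bind_apply (hB0.inter hU.compl) κ.aemeasurable, bind_apply (hB1.inter hU) κ.aemeasurable]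

lemma one_sub_half_mul_inv_two_sub (hδ : δ < 2) : (1 - δ / 2) * (2 - δ)⁻¹ = 2⁻¹ := by
  have h2δ : 2 - δ ≠ 0 := (tsub_pos_of_lt hδ).ne'
  rw [← ENNReal.div_self two_ne_zero ENNReal.ofNat_ne_top,
    ← ENNReal.sub_div (fun _ _ => two_ne_zero), ENNReal.div_eq_inv_mul, mul_assoc,
    ENNReal.mul_inv_cancel h2δ (ENNReal.sub_ne_top ENNReal.ofNat_ne_top), mul_one]

variable (P : Kernel X X) (μ : Measure X)

lemma splitKernel_true (x : X) : splitKernel P U μ δ (x, true) = splitMeasure U δ μ := by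
  simp [splitKernel]

lemma splitKernel_false_of_notMem {x : X} (hx : x ∉ U) :
    splitKernel P U μ δ (x, false) = splitMeasure U δ (P x) := by
  simp [splitKernel, hx]

lemma splitKernel_false_of_mem {x : X} (hx : x ∈ U) :
    splitKernel P U μ δ (x, false)
      = (2 - δ)⁻¹ • (2 • splitMeasure U δ (P x) - δ • splitMeasure U δ μ) := by
  simp [splitKernel, hx]

lemma splitKernel_mix_of_mem [IsFiniteMeasure μ] (hδ : δ < 2) {x : X} (hx : x ∈ U)
    (hsmall : ∀ B : Set X, MeasurableSet B → δ * μ B ≤ P x B)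
    {A : Set (X × Bool)} (hA : MeasurableSet A) :
    (1 - δ / 2) * splitKernel P U μ δ (x, false) A + δ / 2 * splitMeasure U δ μ A
      = splitMeasure U δ (P x) A := by
  have hδtop : δ ≠ ∞ := ne_top_of_lt hδ
  have hle : δ • splitMeasure U δ μ ≤ 2 • splitMeasure U δ (P x) := calc
    δ • splitMeasure U δ μ = splitMeasure U δ (δ • μ) := (splitMeasure_smul δ μ).symm
    _ ≤ splitMeasure U δ (P x) := splitMeasure_mono (Measure.le_iff.2 fun B hB => hsmall B hB)
    _ ≤ 2 • splitMeasure U δ (P x) := by rw [two_smul]; exact Measure.le_add_right le_rfl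
  have := isFiniteMeasure_splitMeasure (U := U) hδtop μ
  have := (splitMeasure U δ μ).smul_finite hδtop
  -- `2⁻¹ (2a - δm) + (δ/2) m = a`; the truncated subtraction is exact thanks to `hle`.
  rw [splitKernel_false_of_mem P μ hx, Measure.smul_apply, sub_apply hA hle, smul_eq_mul,
    ← mul_assoc, one_sub_half_mul_inv_two_sub hδ, ENNReal.div_eq_inv_mul, mul_assoc,
    ← smul_eq_mul δ, ← Measure.smul_apply, ← mul_add,
    tsub_add_cancel_of_le (le_iff'.1 hle A), Measure.smul_apply, nsmul_eq_mul, ← mul_assoc,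
    Nat.cast_ofNat, ENNReal.inv_mul_cancel two_ne_zero ENNReal.ofNat_ne_top, one_mul]

lemma lintegral_splitKernel_splitMeasure [IsFiniteMeasure μ] (hU : MeasurableSet U)
    (hδ : δ < 2) (hsmall : ∀ x ∈ U, ∀ B : Set X, MeasurableSet B → δ * μ B ≤ P x B)
    (ν : Measure X) {A : Set (X × Bool)} (hA : MeasurableSet A) :
    ∫⁻ z, splitKernel P U μ δ z A ∂(splitMeasure U δ ν) = ∫⁻ x, splitMeasure U δ (P x) A ∂ν := by
  have hUc : ∫⁻ x in Uᶜ, splitKernel P U μ δ (x, false) A ∂ν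
      = ∫⁻ x in Uᶜ, splitMeasure U δ (P x) A ∂ν :=
    setLIntegral_congr_fun hU.compl fun x hx => by rw [splitKernel_false_of_notMem P μ hx]
  have hUmix : (1 - δ / 2) * ∫⁻ x in U, splitKernel P U μ δ (x, false) A ∂ν
      + δ / 2 * ∫⁻ x in U, splitKernel P U μ δ (x, true) A ∂ν
      = ∫⁻ x in U, splitMeasure U δ (P x) A ∂ν := by
    rw [← setLIntegral_congr_fun hU fun x hx =>
      splitKernel_mix_of_mem P μ hδ hx (hsmall x hx) hA]
    simp only [splitKernel_true]
    rw [lintegral_add_right _ measurable_const,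
      lintegral_const_mul' _ _ (ENNReal.sub_ne_top ENNReal.one_ne_top),
      lintegral_const_mul _ measurable_const]
  rw [lintegral_splitMeasure, ← lintegral_add_compl (fun x => splitMeasure U δ (P x) A) hU, hUc,
    ← hUmix, add_right_comm]

end SplitChain

theorem split_chain_marginal_general
    {X : Type*} [MeasurableSpace X] (P : Kernel X X)
    (U : Set X) (hU : MeasurableSet U)
    (δ : ℝ≥0∞) (hδ1 : δ ≤ 1)
    (μ : Measure X) [IsProbabilityMeasure μ]
    (hsmall : ∀ x ∈ U, ∀ B : Set X, MeasurableSet B → δ * μ B ≤ P x B)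
    (lam : Measure X) :
    (∀ A : Set (X × Bool), MeasurableSet A →
        ∫⁻ z, splitKernel P U μ δ z A ∂(splitMeasure U δ lam)
          = splitMeasure U δ (lam.bind (fun x => P x)) A) ∧
      (splitMeasure U δ lam).map Prod.fst = lam := by
  have hδ2 : δ < 2 := hδ1.trans_lt one_lt_two
  refine ⟨fun A hA => ?_, splitMeasure_map_fst hU hδ2.le lam⟩
  rw [lintegral_splitKernel_splitMeasure P μ hU hδ2 hsmall lam hA]
  exact (splitMeasure_bind_apply hU lam P hA).symm

theorem split_chain_marginal
    {X : Type*} [MeasurableSpace X] (P : Kernel X X) [IsMarkovKernel P]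
    (U : Set X) (hU : MeasurableSet U)
    (δ : ℝ≥0∞) (hδ0 : 0 < δ) (hδ1 : δ ≤ 1)
    (μ : Measure X) [IsProbabilityMeasure μ] (hμU : μ U = 1)
    (hsmall : ∀ x ∈ U, ∀ B : Set X, MeasurableSet B → δ * μ B ≤ P x B)
    (lam : Measure X) [IsFiniteMeasure lam] :
    (∀ A : Set (X × Bool), MeasurableSet A →
        ∫⁻ z, splitKernel P U μ δ z A ∂(splitMeasure U δ lam)
          = splitMeasure U δ (lam.bind (fun x => P x)) A) ∧
      (splitMeasure U δ lam).map Prod.fst = lam :=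
  split_chain_marginal_general P U hU δ hδ1 μ hsmall lam
end

section
/- Let P be a Markov transition kernel on (X, 𝓑) and let α ∈ 𝓑 be a nonempty atom for P, i.e., there is a probability measure ν with P(x, ·) = ν for all x ∈ α; write P^m(α, ·) and ₍α₎P^m(α, ·) for the common values of P^m(x, ·) and ₍α₎P^m(x, ·) over x ∈ α, with P^0(α, α) := 1. Then for all x ∈ X, A ∈ 𝓑, and n ≥ 1, P^n(x, A) = ₍α₎P^n(x, A) + Σ_{j=1}^{n−1} Σ_{k=1}^{j} ₍α₎P^k(x, α) · P^{j−k}(α, α) · ₍α₎P^{n−j}(α, A). -/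
/-!
Statement 14 (regenerative decomposition at an atom): if `α` is a nonempty atom for `P`
(i.e. `P(x,·) = ν` for every `x ∈ α`), then, writing `Pᵐ(α,·)` and `₍α₎Pᵐ(α,·)` for the
common values of `Pᵐ(x,·)` and `₍α₎Pᵐ(x,·)` over `x ∈ α` (represented by any point
`x₀ ∈ α`, with `P⁰(α,α) = 1` since `P⁰(x₀,·) = δ_{x₀}`), one has for all `x`, measurable
`A`, and `n ≥ 1`:
`Pⁿ(x,A) = ₍α₎Pⁿ(x,A) + Σ_{j=1}^{n-1} Σ_{k=1}^{j} ₍α₎Pᵏ(x,α) · P^{j-k}(α,α) · ₍α₎P^{n-j}(α,A)`.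
-/

open MeasureTheory ProbabilityTheory ENNReal Finset

/-- The `n`-step transition kernel `P^n` (with `P⁰ = id`, i.e. `P⁰(x,·) = δ_x`). -/
noncomputable def nstep {X : Type*} [MeasurableSpace X] (P : Kernel X X) : ℕ → Kernel X X
  | 0 => Kernel.id
  | n + 1 => P ∘ₖ nstep P n

/-- The taboo kernels `₍B₎Pⁿ`. -/
noncomputable def tabooKernel {X : Type*} [MeasurableSpace X] (P : Kernel X X) {B : Set X}
    (hB : MeasurableSet B) : ℕ → Kernel X X
  | 0 => Kernel.id
  | 1 => P
  | n + 2 => P ∘ₖ (tabooKernel P hB (n + 1)).restrict hB.compl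

/-!
From a point of the atom every step has law `P x₀`, so for any measure `μ`,
`P ∘ₘ μ = μ α • P x₀ + P ∘ₘ μ|αᶜ`. Applied to a taboo measure this reads
`P ∘ₘ ₍α₎Pᵐ(z,·) = ₍α₎Pᵐ(z,α) • P(x₀,·) + ₍α₎Pᵐ⁺¹(z,·)`, and induction on `n` gives the
first-entrance and the last-exit decompositions of `Pⁿ(x,·)`. The theorem is the last-exit
decomposition with each `Pʲ(x,α)` expanded by the first-entrance decomposition at `α`.
-/

lemma MeasureTheory.Measure.comp_finset_sum {X Y ι : Type*} [MeasurableSpace X] [MeasurableSpace Y]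
    (P : Kernel X Y) (s : Finset ι) (μ : ι → Measure X) :
    P ∘ₘ (∑ i ∈ s, μ i) = ∑ i ∈ s, P ∘ₘ μ i := by
  classical
  induction s using Finset.induction_on with
  | empty => simp
  | insert i s hi ih => rw [Finset.sum_insert hi, Finset.sum_insert hi, Measure.comp_add, ih]

section Atom

variable {X : Type*} [MeasurableSpace X] (P : Kernel X X)

lemma nstep_one : nstep P 1 = P := Kernel.comp_id P

lemma nstep_succ_apply (n : ℕ) (x : X) : nstep P (n + 1) x = P ∘ₘ nstep P n x :=
  Kernel.comp_apply _ _ _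

variable {α : Set X} (hα : MeasurableSet α)

lemma tabooKernel_one : tabooKernel P hα 1 = P := rfl

lemma tabooKernel_succ_apply {n : ℕ} (hn : n ≠ 0) (x : X) :
    tabooKernel P hα (n + 1) x = P ∘ₘ (tabooKernel P hα n x).restrict αᶜ := by
  obtain ⟨m, rfl⟩ := Nat.exists_eq_succ_of_ne_zero hn
  rw [tabooKernel, Kernel.comp_apply, Kernel.restrict_apply]

variable {P} {x₀ : X} (hP : ∀ y ∈ α, P y = P x₀)
include hα hP

lemma measure_comp_eq_smul_add_comp_restrict_compl (μ : Measure X) :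
    P ∘ₘ μ = μ α • P x₀ + P ∘ₘ μ.restrict αᶜ := by
  have h_on_atom : P ∘ₘ μ.restrict α = μ α • P x₀ := by
    rw [Measure.bind_congr_right ((ae_restrict_iff' hα).2 (Filter.Eventually.of_forall hP)),
      Measure.bind_const, Measure.restrict_apply_univ]
  rw [← h_on_atom, ← Measure.comp_add, Measure.restrict_add_restrict_compl hα]

lemma measure_comp_tabooKernel {n : ℕ} (hn : n ≠ 0) (x : X) :
    P ∘ₘ tabooKernel P hα n x = tabooKernel P hα n x α • P x₀ + tabooKernel P hα (n + 1) x := by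
  rw [measure_comp_eq_smul_add_comp_restrict_compl hα hP, tabooKernel_succ_apply P hα hn]

lemma nstep_succ_apply_firstEntrance (n : ℕ) (x : X) :
    nstep P (n + 1) x = tabooKernel P hα (n + 1) x
      + ∑ k ∈ Icc 1 n, tabooKernel P hα k x α • nstep P (n + 1 - k) x₀ := by
  induction n with
  | zero => simp [nstep_one, tabooKernel]
  | succ n ih =>
    have h_shift : ∀ k ∈ Icc 1 n,
        P ∘ₘ nstep P (n + 1 - k) x₀ = nstep P (n + 1 + 1 - k) x₀ := fun k hk => by
      rw [← nstep_succ_apply, Nat.sub_add_comm ((mem_Icc.1 hk).2.trans n.le_succ)]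
    rw [nstep_succ_apply, ih, Measure.comp_add, Measure.comp_finset_sum,
      measure_comp_tabooKernel hα hP (by omega), sum_Icc_succ_top (by omega),
      Nat.add_sub_cancel_left, nstep_one]
    simp only [Measure.comp_smul]
    rw [sum_congr rfl fun k hk => by rw [h_shift k hk]]
    abel

lemma nstep_succ_apply_lastExit (n : ℕ) (x : X) :
    nstep P (n + 1) x = tabooKernel P hα (n + 1) x
      + ∑ j ∈ Icc 1 n, nstep P j x α • tabooKernel P hα (n + 1 - j) x₀ := by
  induction n with
  | zero => simp [nstep_one, tabooKernel]
  | succ n ih =>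
    have h_shift : ∀ j ∈ Icc 1 n, P ∘ₘ tabooKernel P hα (n + 1 - j) x₀
        = tabooKernel P hα (n + 1 - j) x₀ α • P x₀ + tabooKernel P hα (n + 1 + 1 - j) x₀ :=
      fun j hj => by
        obtain ⟨hj1, hjn⟩ := mem_Icc.1 hj
        rw [measure_comp_tabooKernel hα hP (by omega), Nat.sub_add_comm (hjn.trans n.le_succ)]
    have h_atom : nstep P (n + 1) x α = tabooKernel P hα (n + 1) x α
        + ∑ j ∈ Icc 1 n, nstep P j x α * tabooKernel P hα (n + 1 - j) x₀ α := by
      simp only [ih, Measure.add_apply, Measure.finsetSum_apply, Measure.smul_apply, smul_eq_mul]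
    rw [nstep_succ_apply, ih, Measure.comp_add, Measure.comp_finset_sum,
      measure_comp_tabooKernel hα hP (by omega), sum_Icc_succ_top (by omega),
      Nat.add_sub_cancel_left, h_atom]
    simp only [Measure.comp_smul]
    rw [sum_congr rfl fun j hj => by rw [h_shift j hj]]
    simp only [tabooKernel_one, smul_add, sum_add_distrib, add_smul, sum_smul, smul_smul]
    abel

lemma nstep_succ_apply_atom (hx₀ : x₀ ∈ α) (n : ℕ) (x : X) :
    nstep P (n + 1) x α
      = ∑ k ∈ Icc 1 (n + 1), tabooKernel P hα k x α * nstep P (n + 1 - k) x₀ α := by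
  rw [nstep_succ_apply_firstEntrance hα hP, Measure.add_apply,
    Measure.finsetSum_apply, sum_Icc_succ_top (by omega), Nat.sub_self, nstep,
    Kernel.id_apply, Measure.dirac_apply_of_mem hx₀, mul_one, add_comm]
  simp only [Measure.smul_apply, smul_eq_mul]

end Atom

theorem regenerative_decomposition_at_atom_general
    {X : Type*} [MeasurableSpace X] (P : Kernel X X)
    {α : Set X} (hα : MeasurableSet α)
    (hatom : ∃ ν : Measure X, ∀ x ∈ α, P x = ν)
    (x₀ : X) (hx₀ : x₀ ∈ α)
    (x : X) (A : Set X) (n : ℕ) (hn : 1 ≤ n) :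
    nstep P n x A
      = tabooKernel P hα n x A
        + ∑ j ∈ Finset.Icc 1 (n - 1), ∑ k ∈ Finset.Icc 1 j,
            tabooKernel P hα k x α * nstep P (j - k) x₀ α
              * tabooKernel P hα (n - j) x₀ A := by
  obtain ⟨ν, hν⟩ := hatom
  have hP : ∀ y ∈ α, P y = P x₀ := fun y hy => (hν y hy).trans (hν x₀ hx₀).symm
  obtain ⟨m, rfl⟩ := Nat.exists_eq_add_of_le' hn
  rw [nstep_succ_apply_lastExit hα hP, Measure.add_apply, Measure.finsetSum_apply,
    Nat.add_sub_cancel]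
  congr 1
  refine sum_congr rfl fun j hj => ?_
  obtain ⟨i, rfl⟩ := Nat.exists_eq_add_of_le' (mem_Icc.1 hj).1
  rw [Measure.smul_apply, smul_eq_mul, nstep_succ_apply_atom hα hP hx₀, sum_mul]

theorem regenerative_decomposition_at_atom
    {X : Type*} [MeasurableSpace X] (P : Kernel X X) [IsMarkovKernel P]
    {α : Set X} (hα : MeasurableSet α)
    (hatom : ∃ ν : Measure X, ∀ x ∈ α, P x = ν)
    (x₀ : X) (hx₀ : x₀ ∈ α)
    (x : X) (A : Set X) (hA : MeasurableSet A) (n : ℕ) (hn : 1 ≤ n) :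
    nstep P n x A
      = tabooKernel P hα n x A
        + ∑ j ∈ Finset.Icc 1 (n - 1), ∑ k ∈ Finset.Icc 1 j,
            tabooKernel P hα k x α * nstep P (j - k) x₀ α
              * tabooKernel P hα (n - j) x₀ A :=
  regenerative_decomposition_at_atom_general P hα hatom x₀ hx₀ x A n hn
end
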